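/- arXiv:2510.00294 — 2 statements merged into one kernel-verified Lean document; each statement's English description precedes it below -/
import Mathlib

section
/- Define the verifier h(n, d) = 1 if d = 1, and otherwise h(n, d) = max { i ∈ {1,...,d−1} : I n (n+j+1) = I n (n+j) ∪ D (n+j) for all j ∈ {1,...,i} } (with h(n,d) = 1 if the set is empty). Then the greedily constructed sequence a_0 = 0, a_{k+1} = a_k + h(a_k, min(d, N − a_k)), stopped when it reaches N, is a feasible path from 0 to N. -/
/-- A feasible decoding path: a strictly increasing sequence of timestep indices
`0 = a 0 < a 1 < ... < a M = N` such that each merged decision set equals the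
union of the one-step oracle decision sets it spans. -/
def FeasiblePath {α : Type*} (D : ℕ → Set α) (I : ℕ → ℕ → Set α)
    (N M : ℕ) (a : Fin (M + 1) → ℕ) : Prop :=
  StrictMono a ∧ a 0 = 0 ∧ a (Fin.last M) = N ∧
    ∀ i : Fin M,
      I (a i.castSucc) (a i.succ) =
        ⋃ j ∈ Finset.Ico (a i.castSucc) (a i.succ), D j

open Classical in
/-- The verifier `h(n, d)`: `1` if `d = 1`, otherwise the largest
`i ∈ {1, …, d-1}` such that `I n (n+j+1) = I n (n+j) ∪ D (n+j)` for all
`j ∈ {1, …, i}` (and `1` if no such `i` exists). -/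
noncomputable def verifier {α : Type*} (D : ℕ → Set α) (I : ℕ → ℕ → Set α)
    (n d : ℕ) : ℕ :=
  if d = 1 then 1
  else
    (((Finset.Icc 1 (d - 1)).filter fun i =>
        ∀ j ∈ Finset.Icc 1 i, I n (n + j + 1) = I n (n + j) ∪ D (n + j)).max).getD 1

/-- The greedily constructed sequence `a 0 = 0`,
`a (k+1) = a k + h(a k, min d (N - a k))`. -/
noncomputable def greedyPath {α : Type*} (D : ℕ → Set α) (I : ℕ → ℕ → Set α)
    (N d : ℕ) : ℕ → ℕ
  | 0 => 0
  | k + 1 =>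
    greedyPath D I N d k +
      verifier D I (greedyPath D I N d k) (min d (N - greedyPath D I N d k))


lemma max_getD_spec (s : Finset ℕ) (P : ℕ → Prop) (hs : ∀ x ∈ s, P x) :
    s.max.getD 1 = 1 ∨ P (s.max.getD 1) := by
  rcases h : s.max with _ | m
  · left; rfl
  · right; exact hs m (Finset.mem_of_max h)

section
variable {α : Type*} (D : ℕ → Set α) (I : ℕ → ℕ → Set α)

open Classical in
lemma verifier_cases (n d : ℕ) :
    verifier D I n d = 1 ∨
      (1 ≤ verifier D I n d ∧ verifier D I n d ≤ d - 1 ∧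
        ∀ j ∈ Finset.Icc 1 (verifier D I n d),
          I n (n + j + 1) = I n (n + j) ∪ D (n + j)) := by
  unfold verifier
  split
  · exact Or.inl rfl
  · refine max_getD_spec _
      (fun i => 1 ≤ i ∧ i ≤ d - 1 ∧
        ∀ j ∈ Finset.Icc 1 i, I n (n + j + 1) = I n (n + j) ∪ D (n + j))
      (fun x hx => ?_)
    obtain ⟨h1, h2⟩ :=
      (@Finset.mem_filter ℕ _ (fun _ => Classical.propDecidable _) _ _).mp hx
    rw [Finset.mem_Icc] at h1
    exact ⟨h1.1, h1.2, h2⟩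

lemma verifier_pos (n d : ℕ) : 1 ≤ verifier D I n d := by
  rcases verifier_cases D I n d with h | h
  · omega
  · exact h.1

lemma verifier_le (n d : ℕ) (hd : 1 ≤ d) : verifier D I n d ≤ d := by
  rcases verifier_cases D I n d with h | h
  · omega
  · omega

lemma verifier_spec (hI : ∀ n, I n (n + 1) = D n) (n d : ℕ) :
    I n (n + verifier D I n d) =
      ⋃ j ∈ Finset.Ico n (n + verifier D I n d), D j := by
  have base : I n (n + 1) = ⋃ j ∈ Finset.Ico n (n + 1), D j := by
    simp [hI n]
  rcases verifier_cases D I n d with h1 | ⟨_, _, hcond⟩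
  · rw [h1]; exact base
  · suffices H : ∀ t, 1 ≤ t → t ≤ verifier D I n d →
        I n (n + t) = ⋃ j ∈ Finset.Ico n (n + t), D j from
      H _ (verifier_pos D I n d) le_rfl
    intro t
    induction t with
    | zero => omega
    | succ t ih =>
      intro _ h2
      rcases Nat.eq_zero_or_pos t with ht0 | ht1
      · subst ht0; exact base
      · have hc := hcond t (Finset.mem_Icc.mpr ⟨ht1, by omega⟩)
        have he : I n (n + (t + 1)) = I n (n + t) ∪ D (n + t) := by
          rw [← Nat.add_assoc]; exact hc
        rw [he, ih ht1 (by omega), ← Nat.add_assoc,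
          Nat.Ico_succ_right_eq_insert_Ico (by omega), Finset.set_biUnion_insert]
        exact (Set.union_comm _ _)
end

/-- Verification-based feasible path search (Theorem 1): the greedy
verifier-based sequence, stopped when it reaches `N`, is a feasible path from
`0` to `N`. -/
theorem greedy_verifier_path_feasible {α : Type*} (D : ℕ → Set α) (I : ℕ → ℕ → Set α)
    (hI : ∀ n, I n (n + 1) = D n) (N d : ℕ) (hN : 0 < N) (hd : 1 ≤ d) :
    ∃ M : ℕ, greedyPath D I N d M = N ∧
      FeasiblePath D I N M (fun i => greedyPath D I N d (i : ℕ)) := by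
  classical
  set a := greedyPath D I N d with ha
  have hstep : ∀ k, a (k + 1) = a k + verifier D I (a k) (min d (N - a k)) :=
    fun k => rfl
  have hmono : ∀ k, a k < a (k + 1) := by
    intro k
    have := verifier_pos D I (a k) (min d (N - a k))
    rw [hstep]; omega
  have hSM : StrictMono a := strictMono_nat_of_lt_succ hmono
  have ha0 : a 0 = 0 := rfl
  have hle : ∀ k, a k < N → a (k + 1) ≤ N := by
    intro k hk
    have hm : 1 ≤ min d (N - a k) := by omega
    have := verifier_le D I (a k) (min d (N - a k)) hm
    rw [hstep]; omega
  have hidk : ∀ k, k ≤ a k := fun k => hSM.le_apply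
  have hex : ∃ k, N ≤ a k := ⟨N, hidk N⟩
  set M := Nat.find hex with hM
  have hMle : N ≤ a M := Nat.find_spec hex
  have hM0 : M ≠ 0 := by
    intro h0
    rw [h0, ha0] at hMle; omega
  have hprev : a (M - 1) < N := by
    have := Nat.find_min hex (show M - 1 < M by omega)
    omega
  have haM : a M = N := by
    have h1 := hle _ hprev
    have hM1 : M - 1 + 1 = M := by omega
    rw [hM1] at h1; omega
  refine ⟨M, haM, ?_, ha0, ?_, ?_⟩
  · intro i j hij
    exact hSM (show (i : ℕ) < (j : ℕ) from hij)
  · simpa using haM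
  · intro i
    have hlt : a (i : ℕ) < N := by
      have h1 := hSM i.isLt
      omega
    have hcs : ((i.castSucc : Fin (M + 1)) : ℕ) = (i : ℕ) := rfl
    have hsc : ((i.succ : Fin (M + 1)) : ℕ) = (i : ℕ) + 1 := rfl
    simp only [hcs, hsc, hstep (i : ℕ)]
    exact verifier_spec D I hI (a (i : ℕ)) (min d (N - a (i : ℕ)))
end

section
/- Suppose the verifier acceptance test in FreeDave is implemented by sequential matching: given draft candidates X_draft^1, ..., X_draft^d and targets X_target^1, ..., X_target^{d-1}, let m = the largest k ∈ {0,...,d−1} such that X_draft^{j+1} = X_target^j for all j ∈ {1,...,k}. If X_target^j is the result of applying one oracle decoding step to X_draft^j, and X_draft^{j} is the result of applying j oracle steps to the current state for all j ≤ m+1, then accepting X_draft^{m+1} advances the decoding by exactly m+1 oracle steps and the resulting state equals the state produced by m+1 steps of static decoding. -/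
/-- Losslessness of the accept-by-prefix-matching rule in FreeDave: let `step`
be the deterministic one-step oracle decoder, `x` the current state, and let
`m` be the largest `k ∈ {0, …, d-1}` with `draft (j+1) = target j` for all
`j ∈ {1, …, k}`. If each target is one oracle step applied to the corresponding
draft (`target j = step (draft j)` for `1 ≤ j ≤ m`), and the first draft is one
oracle step from the current state (`draft 1 = step x`), then the accepted
candidate `draft (m+1)` advances the decoding by exactly `m + 1` oracle steps:
it equals the state produced by `m + 1` steps of static decoding from `x`. -/
theorem freedave_prefix_match_lossless {State : Type*} (step : State → State)
    (x : State) (d : ℕ) (draft target : ℕ → State) (m : ℕ)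
    (hmd : m + 1 ≤ d)
    (hdraft1 : draft 1 = step x)
    (htarget : ∀ j, 1 ≤ j → j ≤ m → target j = step (draft j))
    (hmatch : ∀ j, 1 ≤ j → j ≤ m → draft (j + 1) = target j) :
    draft (m + 1) = step^[m + 1] x := by
  induction m with
  | zero => simpa using hdraft1
  | succ n ih =>
    have h1 : draft (n + 1) = step^[n + 1] x :=
      ih (le_trans (Nat.le_succ _) hmd)
        (fun j h1 h2 => htarget j h1 (le_trans h2 (Nat.le_succ _)))
        (fun j h1 h2 => hmatch j h1 (le_trans h2 (Nat.le_succ _)))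
    rw [hmatch (n+1) (Nat.le_add_left _ _) le_rfl,
      htarget (n+1) (Nat.le_add_left _ _) le_rfl, h1,
      Function.iterate_succ_apply' step (n+1) x]
end
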